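/- Let A be the adjacency matrix of a weighted star K_{1,n} with center v_{n+1} and edge weights w_1, ..., w_n on the edges v_i v_{n+1} (with not all w_i zero). Then A# = (1/p) A, where p = w_1² + ... + w_n². -/

import Mathlib

open SimpleGraph

/-- `X` is the group inverse of `A`. -/
def IsGroupInverse {n : Type*} [Fintype n] (A X : Matrix n n ℝ) : Prop :=
  A * X * A = A ∧ X * A * X = X ∧ A * X = X * A

/-- A matching of a graph: a set of pairwise non-incident edges. -/
def IsMatching {V : Type*} (G : SimpleGraph V) (M : Finset (Sym2 V)) : Prop :=
  (↑M : Set (Sym2 V)) ⊆ G.edgeSet ∧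
    ∀ e ∈ M, ∀ f ∈ M, e ≠ f → ∀ v : V, ¬(v ∈ e ∧ v ∈ f)

/-- A maximum matching: a matching of maximum cardinality. -/
def IsMaxMatching {V : Type*} (G : SimpleGraph V) (M : Finset (Sym2 V)) : Prop :=
  IsMatching G M ∧ ∀ N : Finset (Sym2 V), IsMatching G N → N.card ≤ M.card

/-- A nonempty list of edges alternately in and out of `M`,
beginning and ending with edges of `M`. -/
def IsAltEdgeList {V : Type*} (M : Set (Sym2 V)) : List (Sym2 V) → Prop
  | [] => False
  | [e] => e ∈ M
  | e :: f :: rest => e ∈ M ∧ f ∉ M ∧ IsAltEdgeList M rest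

/-- A pair of vertices is maximally matchable if they are joined by a path that is
alternating with respect to some maximum matching. -/
def MaxMatchable {V : Type*} (G : SimpleGraph V) (u v : V) : Prop :=
  ∃ (p : G.Walk u v) (M : Finset (Sym2 V)),
    p.IsPath ∧ IsMaxMatching G M ∧ IsAltEdgeList (↑M) p.edges

/-- `G` is a star: some center `c` is adjacent to exactly the other vertices,
and there are no other edges. -/
def IsStar {V : Type*} (G : SimpleGraph V) : Prop :=
  ∃ c : V, ∀ u v : V, G.Adj u v ↔ ((u = c ∧ v ≠ c) ∨ (v = c ∧ u ≠ c))

/-- The class 𝕋: trees with at least one non-pendant vertex in which every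
non-pendant vertex is adjacent to a pendant vertex. -/
def InClassT {V : Type*} [Fintype V] (T : SimpleGraph V) [DecidableRel T.Adj] : Prop :=
  T.IsTree ∧ (∃ v, T.degree v ≠ 1) ∧
    ∀ v, T.degree v ≠ 1 → ∃ u, T.Adj v u ∧ T.degree u = 1

/-- The number of pendant neighbours of `v`. -/
def pendantNbrs {V : Type*} [Fintype V] [DecidableEq V] (T : SimpleGraph V)
    [DecidableRel T.Adj] (v : V) : ℕ :=
  ((T.neighborFinset v).filter fun u => T.degree u = 1).card

/-!
For `A = [[0, x], [xᵀ, 0]]` one has `A³ = [[0, x (xᵀx)], [(xᵀx) xᵀ, 0]] = p A`, since `xᵀx` is the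
`1 × 1` matrix `p`. Any `A` with `A³ = p A`, `p ≠ 0`, has group inverse `p⁻¹ A`: after pulling out
the scalars, each defining identity reduces to `A³ = p A`.
-/

namespace Matrix

variable {l m R : Type*} [Fintype l] [Fintype m] [CommRing R]

theorem fromBlocks_zero_mul_self_mul_self (B : Matrix l m R) (C : Matrix m l R) :
    fromBlocks 0 B C 0 * fromBlocks 0 B C 0 * fromBlocks 0 B C 0 =
      fromBlocks 0 (B * C * B) (C * B * C) 0 := by
  simp only [fromBlocks_multiply, Matrix.mul_zero, Matrix.zero_mul, add_zero, zero_add]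

theorem fromBlocks_zero_mul_self_mul_self_eq_smul [DecidableEq m] {B : Matrix l m R}
    {C : Matrix m l R} {p : R} (hCB : C * B = p • 1) :
    fromBlocks 0 B C 0 * fromBlocks 0 B C 0 * fromBlocks 0 B C 0 = p • fromBlocks 0 B C 0 := by
  rw [fromBlocks_zero_mul_self_mul_self, fromBlocks_smul, smul_zero, smul_zero, Matrix.mul_assoc,
    hCB, Matrix.mul_smul, Matrix.mul_one, Matrix.smul_mul, Matrix.one_mul]

end Matrix

theorem isGroupInverse_inv_smul_of_mul_self_mul_self_eq_smul {ι : Type*} [Fintype ι]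
    {A : Matrix ι ι ℝ} {p : ℝ} (hp : p ≠ 0) (hA : A * A * A = p • A) :
    IsGroupInverse A (p⁻¹ • A) := by
  refine ⟨?_, ?_, ?_⟩
  · rw [Matrix.mul_smul, Matrix.smul_mul, hA, smul_smul, inv_mul_cancel₀ hp, one_smul]
  · rw [Matrix.smul_mul, Matrix.smul_mul, Matrix.mul_smul, hA, smul_smul, smul_smul,
      inv_mul_cancel_right₀ hp]
  · rw [Matrix.mul_smul, Matrix.smul_mul]

theorem group_inverse_star {n : ℕ} (w : Fin n → ℝ) (hw : w ≠ 0) :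
    IsGroupInverse
      (Matrix.fromBlocks 0 (Matrix.of fun i (_ : Unit) => w i)
        (Matrix.of fun (_ : Unit) j => w j) 0)
      ((∑ i, w i ^ 2)⁻¹ •
        Matrix.fromBlocks 0 (Matrix.of fun i (_ : Unit) => w i)
          (Matrix.of fun (_ : Unit) j => w j) 0) := by
  have hp : ∑ i, w i ^ 2 ≠ 0 := by
    simpa only [dotProduct, sq] using dotProduct_self_eq_zero.not.mpr hw
  have hyx : Matrix.replicateRow Unit w * Matrix.replicateCol Unit w = (∑ i, w i ^ 2) • 1 := by
    ext
    simp [dotProduct, sq]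
  exact isGroupInverse_inv_smul_of_mul_self_mul_self_eq_smul hp
    (Matrix.fromBlocks_zero_mul_self_mul_self_eq_smul hyx)
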